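/- For all positive real numbers x, y, x̄, ȳ, the inequality log(1 + x/y) ≥ log(1 + x̄/ȳ) + (x̄/ȳ)·(2·√x/√x̄ − (x + y)/(x̄ + ȳ) − 1) holds, where log denotes the natural logarithm. Moreover, if x = x̄ and y = ȳ, the inequality holds with equality. -/

import Mathlib

lemma aux_sfp (u y ub yb : ℝ) (hu : 0 < u) (hy : 0 < y) (hub : 0 < ub) (hyb : 0 < yb) :
    (ub^2 / yb) * (2 * u / ub - (u^2 + y) / (ub^2 + yb) - 1) ≤
      1 - (1 + ub^2 / yb) / (1 + u^2 / y) := by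
  have hS : 0 < ub^2 + yb := by positivity
  have hs : 0 < u^2 + y := by positivity
  have key := sq_nonneg (u * (ub^2 + yb) - ub * (u^2 + y))
  have hA : 0 < 1 + u^2 / y := by positivity
  field_simp
  nlinarith [mul_pos hs hS, mul_pos hy hyb, mul_pos hu hub,
    mul_nonneg (mul_nonneg key hy.le) hyb.le, sq_nonneg (u - ub)]

/-- Scalar lower bound used in sequential fractional programming:
for positive reals `x, y, x̄, ȳ`,
`log(1 + x/y) ≥ log(1 + x̄/ȳ) + (x̄/ȳ)·(2√x/√x̄ − (x+y)/(x̄+ȳ) − 1)`,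
with equality when `x = x̄` and `y = ȳ`. -/
theorem stmt_0 (x y xb yb : ℝ) (hx : 0 < x) (hy : 0 < y) (hxb : 0 < xb) (hyb : 0 < yb) :
    Real.log (1 + x / y) ≥
      Real.log (1 + xb / yb) +
        (xb / yb) * (2 * Real.sqrt x / Real.sqrt xb - (x + y) / (xb + yb) - 1) ∧
    (x = xb → y = yb →
      Real.log (1 + x / y) =
        Real.log (1 + xb / yb) +
          (xb / yb) * (2 * Real.sqrt x / Real.sqrt xb - (x + y) / (xb + yb) - 1)) := by
  constructor
  · set u := Real.sqrt x with hudef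
    set ub := Real.sqrt xb with hubdef
    have hu : 0 < u := Real.sqrt_pos.mpr hx
    have hub : 0 < ub := Real.sqrt_pos.mpr hxb
    have hx2 : u ^ 2 = x := Real.sq_sqrt hx.le
    have hxb2 : ub ^ 2 = xb := Real.sq_sqrt hxb.le
    have hA : 0 < 1 + x / y := by positivity
    have hB : 0 < 1 + xb / yb := by positivity
    have h1 : Real.log (1 + xb / yb) - Real.log (1 + x / y) ≤
        (1 + xb / yb) / (1 + x / y) - 1 := by
      rw [← Real.log_div hB.ne' hA.ne']
      exact Real.log_le_sub_one_of_pos (div_pos hB hA)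
    have h2 := aux_sfp u y ub yb hu hy hub hyb
    rw [hx2, hxb2] at h2
    linarith
  · rintro rfl rfl
    rw [mul_div_assoc, div_self (Real.sqrt_ne_zero'.mpr hx),
      div_self (by positivity : x + y ≠ 0)]
    ring
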